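/- Let α be a positive integer, β ∈ ℂ with Re(β) > −1, and n ≥ 1 an integer. Then Σ_{m=1}^{n} (−1)^{m−1} · C_{n,m}/(n−m)! = Γ(αn+β+1)/(Γ(α(n−1)+β+1)·n!). -/

import Mathlib

open Finset

/-!
`m!·n·C_{n,m}` is the binomial transform `Σ_{j ≤ m} binom(m,j) w_j` of
`w_j = (−1)^j (n−j) (α(n−j)+β)_α`. Since `binom(n,m)/n! = 1/(m!(n−m)!)`, the sum in question is
`−1/(n!·n)` times the alternating sum `Σ_{1 ≤ m ≤ n} (−1)^m binom(n,m) Σ_{j ≤ m} binom(m,j) w_j`.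
Binomial inversion evaluates the full alternating sum over `0 ≤ m ≤ n` to `(−1)^n w_n = 0`, so
the sum is `w_0/(n!·n) = (αn+β)_α/n!`, and `(αn+β)_α = Γ(αn+β+1)/Γ(α(n−1)+β+1)`.
-/

/-- `C_{n,m}(α,β) = (1/(m!·n)) Σ_{j=0}^{m} (−1)^j binom(m,j)(n−j)·(α(n−j)+β)_α`,
where `(γ)_r = γ(γ−1)⋯(γ−r+1)` is the falling factorial. -/
noncomputable def Cnm (α : ℕ) (β : ℂ) (n m : ℕ) : ℂ :=
  1 / ((m.factorial : ℂ) * n) *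
    ∑ j ∈ range (m + 1), (-1 : ℂ) ^ j * (m.choose j : ℂ) * ((n : ℂ) - j) *
      ∏ i ∈ range α, ((α : ℂ) * ((n : ℂ) - j) + β - i)

theorem sum_range_neg_one_pow_mul_choose_mul_choose {R : Type*} [CommRing R] (n j : ℕ) :
    ∑ m ∈ range (n + 1), (-1 : R) ^ m * n.choose m * m.choose j =
      if n = j then (-1) ^ n else 0 := by
  have hdiff := congrArg (Int.cast : ℤ → R) (fwdDiff_iter_choose_zero j n)
  rw [fwdDiff_iter_eq_sum_shift] at hdiff
  push_cast [smul_eq_mul, zero_add, mul_one, apply_ite (Int.cast : ℤ → R)] at hdiff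
  calc ∑ m ∈ range (n + 1), (-1 : R) ^ m * n.choose m * m.choose j
      = (-1) ^ n * ∑ m ∈ range (n + 1), (-1 : R) ^ (n - m) * n.choose m * m.choose j := by
        rw [mul_sum]
        refine sum_congr rfl fun m hm => ?_
        have hparity : n + (n - m) = m + 2 * (n - m) := by grind
        rw [← mul_assoc, ← mul_assoc, ← pow_add, hparity, pow_add, pow_mul, neg_one_sq, one_pow,
          mul_one]
    _ = if n = j then (-1) ^ n else 0 := by rw [hdiff, mul_ite, mul_one, mul_zero]

def binomialTransform {R : Type*} [Semiring R] (w : ℕ → R) (m : ℕ) : R :=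
  ∑ j ∈ range (m + 1), m.choose j * w j

theorem sum_range_neg_one_pow_mul_choose_mul_binomialTransform {R : Type*} [CommRing R]
    (w : ℕ → R) (n : ℕ) :
    ∑ m ∈ range (n + 1), (-1 : R) ^ m * n.choose m * binomialTransform w m = (-1) ^ n * w n := by
  have extend : ∀ m ∈ range (n + 1),
      binomialTransform w m = ∑ j ∈ range (n + 1), m.choose j * w j := fun m hm =>
    sum_subset (range_subset_range.2 (by simpa using hm)) fun j _ hj => by
      rw [Nat.choose_eq_zero_of_lt (by simpa using hj), Nat.cast_zero, zero_mul]
  calc ∑ m ∈ range (n + 1), (-1 : R) ^ m * n.choose m * binomialTransform w m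
      = ∑ j ∈ range (n + 1),
          (∑ m ∈ range (n + 1), (-1 : R) ^ m * n.choose m * m.choose j) * w j := by
        rw [sum_congr rfl fun m hm => by rw [extend m hm, mul_sum]]
        simp_rw [sum_mul, mul_assoc]
        exact sum_comm
    _ = (-1) ^ n * w n := by simp [sum_range_neg_one_pow_mul_choose_mul_choose]

def cnmWeight (α : ℕ) (β : ℂ) (n j : ℕ) : ℂ :=
  (-1) ^ j * ((n : ℂ) - j) * ∏ i ∈ range α, ((α : ℂ) * ((n : ℂ) - j) + β - i)

theorem Cnm_eq_binomialTransform (α : ℕ) (β : ℂ) (n m : ℕ) :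
    Cnm α β n m = binomialTransform (cnmWeight α β n) m / (m.factorial * n) := by
  rw [Cnm, binomialTransform, one_div_mul_eq_div]
  congr 1
  exact sum_congr rfl fun j _ => by rw [cnmWeight]; ring

theorem neg_one_pow_mul_Cnm_div_factorial (α : ℕ) (β : ℂ) {n m : ℕ} (hm : 1 ≤ m)
    (hmn : m ≤ n) :
    (-1 : ℂ) ^ (m - 1) * Cnm α β n m / ((n - m).factorial : ℂ) =
      -((-1) ^ m * n.choose m * binomialTransform (cnmWeight α β n) m) / (n.factorial * n) := by
  have hn : (n : ℂ) ≠ 0 := by exact_mod_cast (by omega : n ≠ 0)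
  have hfact : (n.factorial : ℂ) ≠ 0 := Nat.cast_ne_zero.2 n.factorial_ne_zero
  obtain ⟨k, rfl⟩ := Nat.exists_eq_add_of_le' hm
  rw [Cnm_eq_binomialTransform, Nat.cast_choose ℂ hmn, Nat.add_sub_cancel, pow_succ]
  field_simp

theorem sum_Icc_neg_one_pow_mul_choose_mul_binomialTransform_cnmWeight (α : ℕ) (β : ℂ) (n : ℕ) :
    ∑ m ∈ Icc 1 n, (-1 : ℂ) ^ m * n.choose m * binomialTransform (cnmWeight α β n) m =
      -cnmWeight α β n 0 := by
  have hinv := sum_range_neg_one_pow_mul_choose_mul_binomialTransform (cnmWeight α β n) n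
  rw [range_eq_Ico, sum_eq_sum_Ico_succ_bot n.succ_pos] at hinv
  simpa [cnmWeight, binomialTransform, Ico_add_one_right_eq_Icc, add_eq_zero_iff_eq_neg']
    using hinv

theorem Complex.prod_range_sub_eq_Gamma_div (z : ℂ) (k : ℕ) (hz : ∀ j : ℕ, z + 1 - k ≠ -j) :
    ∏ i ∈ range k, (z - i) = Gamma (z + 1) / Gamma (z + 1 - k) := by
  rw [← descPochhammer_eval_eq_prod_range, descPochhammer_eval_eq_ascPochhammer,
    sub_add_eq_add_sub, ← Gamma_add_nat_div_Gamma_eq _ hz, sub_add_cancel]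

theorem Cnm_full_sum_identity_general (α : ℕ) (β : ℂ) (hβ : -1 < β.re)
    (n : ℕ) (hn : 1 ≤ n) :
    ∑ m ∈ Icc 1 n, (-1 : ℂ) ^ (m - 1) * Cnm α β n m / ((n - m).factorial : ℂ) =
      Complex.Gamma ((α : ℂ) * n + β + 1) /
        (Complex.Gamma ((α : ℂ) * ((n : ℂ) - 1) + β + 1) * (n.factorial : ℂ)) := by
  have hshift : (α : ℂ) * n + β + 1 - α = α * (n - 1) + β + 1 := by ring
  have hpole : ∀ j : ℕ, (α : ℂ) * n + β + 1 - α ≠ -j := fun j h => by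
    have hre := congrArg Complex.re (hshift ▸ h)
    have : (1 : ℝ) ≤ n := by exact_mod_cast hn
    simp only [Complex.add_re, Complex.mul_re, Complex.sub_re, Complex.natCast_re,
      Complex.natCast_im, Complex.one_re, Complex.one_im, Complex.sub_im, Complex.neg_re] at hre
    nlinarith [(α.cast_nonneg : (0 : ℝ) ≤ α), (j.cast_nonneg : (0 : ℝ) ≤ j)]
  rw [sum_congr rfl fun m hm => neg_one_pow_mul_Cnm_div_factorial α β (mem_Icc.1 hm).1
      (mem_Icc.1 hm).2, ← sum_div, sum_neg_distrib,
    sum_Icc_neg_one_pow_mul_choose_mul_binomialTransform_cnmWeight, neg_neg, cnmWeight]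
  simp only [pow_zero, Nat.cast_zero, sub_zero, one_mul]
  rw [Complex.prod_range_sub_eq_Gamma_div _ _ hpole, hshift]
  have hn0 : (n : ℂ) ≠ 0 := by exact_mod_cast (by omega : n ≠ 0)
  field_simp

/-- `Σ_{m=1}^{n} (−1)^{m−1} C_{n,m}/(n−m)! = Γ(αn+β+1)/(Γ(α(n−1)+β+1)·n!)`. -/
theorem Cnm_full_sum_identity (α : ℕ) (hα : 0 < α) (β : ℂ) (hβ : -1 < β.re)
    (n : ℕ) (hn : 1 ≤ n) :
    ∑ m ∈ Icc 1 n, (-1 : ℂ) ^ (m - 1) * Cnm α β n m / ((n - m).factorial : ℂ) =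
      Complex.Gamma ((α : ℂ) * n + β + 1) /
        (Complex.Gamma ((α : ℂ) * ((n : ℂ) - 1) + β + 1) * (n.factorial : ℂ)) :=
  Cnm_full_sum_identity_general α β hβ n hn
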